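/- Define Δ_1 = 1, Δ_{i+1} = 2^{Δ_i} + Δ_i, and α = Σ_{j=1}^∞ 2^{-Δ_j}. For i > 1 and 0 ≤ n ≤ Δ_i, the tail satisfies 2^n n (α − Σ_{j=1}^i 2^{-Δ_j}) = 2^n n Σ_{j=i+1}^∞ 2^{-Δ_j} < 2^{-(Δ_i + 1 − n)}. Consequently, for 0 ≤ n ≤ Δ_i, {2^n n α} < 1/2 if and only if {2^n n Σ_{j=1}^i 2^{-Δ_j}} < 1/2. -/

import Mathlib

/-- `Delta i` is Δ_{i+1} of the paper: Δ_1 = 1, Δ_{i+1} = 2^{Δ_i} + Δ_i. -/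
def Delta : ℕ → ℕ
  | 0 => 1
  | i + 1 => 2 ^ Delta i + Delta i

/-- `α = Σ_{j=1}^∞ 2^{-Δ_j}`. -/
noncomputable def alphaA034797 : ℝ := ∑' j : ℕ, ((2 : ℝ) ^ Delta j)⁻¹

lemma Delta_pos (i : ℕ) : 1 ≤ Delta i := by
  induction i with
  | zero => simp [Delta]
  | succ m ih => exact le_trans ih (by simp only [Delta]; exact Nat.le_add_left _ _)

lemma Delta_mono : Monotone Delta :=
  monotone_nat_of_le_succ (fun m => by simp only [Delta]; exact Nat.le_add_left _ _)

lemma Delta_add_le (i k : ℕ) : Delta i + 2 * k ≤ Delta (i + k) := by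
  induction k with
  | zero => simp
  | succ m ih =>
      have h2 : 2 ≤ 2 ^ Delta (i + m) :=
        le_trans (by norm_num) (Nat.pow_le_pow_right (by norm_num) (Delta_pos _))
      have : Delta (i + (m+1)) = 2 ^ Delta (i + m) + Delta (i + m) := rfl
      omega

lemma Delta_ge (i : ℕ) : i ≤ Delta i := by
  have := Delta_add_le 0 i
  simp only [Nat.zero_add] at this
  have : Delta 0 + 2 * i ≤ Delta i := this
  simp [Delta] at this
  omega

lemma summable_delta : Summable (fun j : ℕ => ((2 : ℝ) ^ Delta j)⁻¹) := by
  apply Summable.of_nonneg_of_le (fun j => by positivity) (fun j => ?_)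
    (summable_geometric_two)
  have h : (2:ℝ) ^ (j:ℕ) ≤ 2 ^ Delta j := pow_le_pow_right₀ (by norm_num) (Delta_ge j)
  rw [show ((1:ℝ)/2)^j = ((2:ℝ)^j)⁻¹ by rw [one_div, inv_pow]]
  exact inv_anti₀ (by positivity) h

lemma tail_eq (i : ℕ) :
    alphaA034797 - ∑ j ∈ Finset.range i, ((2 : ℝ) ^ Delta j)⁻¹
      = ∑' k : ℕ, ((2 : ℝ) ^ Delta (k + i))⁻¹ := by
  rw [alphaA034797, ← summable_delta.sum_add_tsum_nat_add i]
  ring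

lemma tail_nonneg (i : ℕ) : 0 ≤ ∑' k : ℕ, ((2 : ℝ) ^ Delta (k + i))⁻¹ :=
  tsum_nonneg fun k => by positivity

set_option maxHeartbeats 1000000 in
lemma tail_lt (i : ℕ) :
    ∑' k : ℕ, ((2 : ℝ) ^ Delta (k + i))⁻¹ < 2 * ((2 : ℝ) ^ Delta i)⁻¹ := by
  have hgeo : Summable (fun k : ℕ => ((1:ℝ)/4)^k) :=
    summable_geometric_of_lt_one (by norm_num) (by norm_num)
  have hsum : Summable (fun k : ℕ => ((2:ℝ) ^ Delta i)⁻¹ * (1/4)^k) := hgeo.mul_left _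
  have hterm : ∀ k, ((2 : ℝ) ^ Delta (k + i))⁻¹ ≤ ((2:ℝ) ^ Delta i)⁻¹ * (1/4)^k := by
    intro k
    have h1 : Delta i + 2 * k ≤ Delta (k + i) := by
      rw [Nat.add_comm k i]; exact Delta_add_le i k
    have h2 : (2:ℝ) ^ (Delta i + 2*k) ≤ 2 ^ Delta (k + i) :=
      pow_le_pow_right₀ (by norm_num) h1
    have h3 : ((2:ℝ)^Delta i)⁻¹ * (1/4)^k = ((2:ℝ)^(Delta i + 2*k))⁻¹ := by
      rw [pow_add, mul_inv, pow_mul]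
      norm_num [one_div, ← inv_pow]
    rw [h3]
    exact inv_anti₀ (by positivity) h2
  have hx : (0:ℝ) < ((2:ℝ) ^ Delta i)⁻¹ := by positivity
  calc ∑' k : ℕ, ((2 : ℝ) ^ Delta (k + i))⁻¹
      ≤ ∑' k : ℕ, ((2:ℝ) ^ Delta i)⁻¹ * (1/4)^k :=
        ((summable_nat_add_iff i).2 summable_delta).tsum_le_tsum hterm hsum
    _ = ((2:ℝ) ^ Delta i)⁻¹ * (4/3) := by
        rw [tsum_mul_left, tsum_geometric_of_lt_one (by norm_num) (by norm_num)]
        norm_num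
    _ < 2 * ((2 : ℝ) ^ Delta i)⁻¹ := by linarith

lemma nat_le_pow_aux (D : ℕ) (hD : 1 ≤ D) : D ≤ 2 ^ (2 ^ D - 2) := by
  have h1 : D < 2 ^ D := Nat.lt_two_pow_self
  have h2 : D - 1 < 2 ^ (D - 1) := Nat.lt_two_pow_self
  have h3 : 2 ^ (D - 1) ≤ 2 ^ (2 ^ D - 2) :=
    Nat.pow_le_pow_right (by norm_num) (by omega)
  omega

set_option maxHeartbeats 1000000 in
/-- For `i > 1` and `0 ≤ n ≤ Δ_i`, the tail of α beyond the i-th term satisfies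
`2^n n (α − Σ_{j=1}^i 2^{-Δ_j}) < 2^{-(Δ_i + 1 − n)}`; consequently
`{2^n n α} < 1/2 ↔ {2^n n Σ_{j=1}^i 2^{-Δ_j}} < 1/2`. -/
theorem fract_alpha_partial_sum_equiv
    (i : ℕ) (hi : 1 < i) (n : ℕ) (hn : n ≤ Delta (i - 1)) :
    (2 : ℝ) ^ n * n * (alphaA034797 - ∑ j ∈ Finset.range i, ((2 : ℝ) ^ Delta j)⁻¹)
        < (2 : ℝ) ^ ((n : ℤ) - (Delta (i - 1) : ℤ) - 1) ∧
    (Int.fract ((2 : ℝ) ^ n * n * alphaA034797) < 1 / 2 ↔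
      Int.fract ((2 : ℝ) ^ n * n * ∑ j ∈ Finset.range i, ((2 : ℝ) ^ Delta j)⁻¹)
        < 1 / 2) := by
  set D := Delta (i - 1) with hDdef
  have hD1 : 1 ≤ D := Delta_pos _
  have hi1 : i - 1 + 1 = i := by omega
  have hDi : Delta i = 2 ^ D + D := by
    rw [← hi1]; rfl
  set S := ∑ j ∈ Finset.range i, ((2 : ℝ) ^ Delta j)⁻¹ with hSdef
  -- Part 1
  have part1 : (2 : ℝ) ^ n * n * (alphaA034797 - S) < (2 : ℝ) ^ ((n : ℤ) - (D : ℤ) - 1) := by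
    rw [hSdef, tail_eq i]
    rcases Nat.eq_zero_or_pos n with hn0 | hn0
    · subst hn0
      simp only [Nat.cast_zero, mul_zero, zero_mul]
      positivity
    · have hnpos : (0 : ℝ) < (2 : ℝ) ^ n * n := by positivity
      have hcast : (n : ℝ) ≤ (2 : ℝ) ^ (2 ^ D - 2 : ℕ) := by
        exact_mod_cast le_trans hn (nat_le_pow_aux D hD1)
      have hkey : (2 : ℝ) ^ n * (2 : ℝ) ^ (2 ^ D - 2 : ℕ) * (2 * ((2 : ℝ) ^ Delta i)⁻¹)
          = (2 : ℝ) ^ ((n : ℤ) - (D : ℤ) - 1) := by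
        rw [hDi]
        have hE2 : 2 ≤ 2 ^ D := by
          calc 2 = 2 ^ 1 := rfl
          _ ≤ 2 ^ D := Nat.pow_le_pow_right (by norm_num) hD1
        generalize hE : (2 : ℕ) ^ D = E at hE2 ⊢
        calc (2 : ℝ) ^ n * (2 : ℝ) ^ (E - 2 : ℕ) * (2 * ((2 : ℝ) ^ (E + D : ℕ))⁻¹)
            = (2 : ℝ) ^ (n + (E - 2) + 1 : ℕ) * ((2 : ℝ) ^ (E + D : ℕ))⁻¹ := by
              rw [pow_add, pow_add, pow_one]; ring
          _ = (2 : ℝ) ^ ((n + (E - 2) + 1 : ℕ) : ℤ) * (2 : ℝ) ^ (-((E + D : ℕ) : ℤ)) := by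
              rw [zpow_natCast, zpow_neg, zpow_natCast]
          _ = (2 : ℝ) ^ (((n + (E - 2) + 1 : ℕ) : ℤ) + -((E + D : ℕ) : ℤ)) := by
              rw [← zpow_add₀ (two_ne_zero : (2:ℝ) ≠ 0)]
          _ = (2 : ℝ) ^ ((n : ℤ) - (D : ℤ) - 1) := by congr 1; omega
      calc (2 : ℝ) ^ n * n * (∑' k : ℕ, ((2 : ℝ) ^ Delta (k + i))⁻¹)
          < (2 : ℝ) ^ n * n * (2 * ((2 : ℝ) ^ Delta i)⁻¹) :=
            mul_lt_mul_of_pos_left (tail_lt i) hnpos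
        _ ≤ (2 : ℝ) ^ n * (2 : ℝ) ^ (2 ^ D - 2 : ℕ) * (2 * ((2 : ℝ) ^ Delta i)⁻¹) := by
            gcongr
        _ = (2 : ℝ) ^ ((n : ℤ) - (D : ℤ) - 1) := hkey
  refine ⟨part1, ?_⟩
  -- Part 2
  set k := D - n with hkdef
  set N := 2 ^ k with hNdef
  set M := n * ∑ j ∈ Finset.range i, 2 ^ (D - Delta j) with hMdef
  have hNpos : 0 < N := pow_pos (by norm_num) k
  have hNR : (0 : ℝ) < (N : ℝ) := by exact_mod_cast hNpos
  have hy : (2 : ℝ) ^ n * n * S = (M : ℝ) / (N : ℝ) := by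
    rw [eq_div_iff (ne_of_gt hNR)]
    have hNcast : (N : ℝ) = (2 : ℝ) ^ k := by rw [hNdef]; push_cast; ring
    rw [hNcast, hSdef, hMdef]
    push_cast
    rw [Finset.mul_sum, Finset.mul_sum, Finset.sum_mul]
    apply Finset.sum_congr rfl
    intro j hj
    have hjD : Delta j ≤ D := by
      rw [hDdef]
      exact Delta_mono (by simp at hj; omega)
    have h2 : ((2 : ℝ) ^ Delta j) ≠ 0 := by positivity
    have haux : (2 : ℝ) ^ n * ((2 : ℝ) ^ Delta j)⁻¹ * (2 : ℝ) ^ k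
        = (2 : ℝ) ^ (D - Delta j) := by
      have h1 : (2 : ℝ) ^ n * (2 : ℝ) ^ k = (2 : ℝ) ^ (D - Delta j) * (2 : ℝ) ^ Delta j := by
        rw [← pow_add, ← pow_add]; congr 1; omega
      rw [mul_comm ((2 : ℝ) ^ n), mul_assoc, inv_mul_eq_div, div_eq_iff h2]
      exact h1
    calc (2 : ℝ) ^ n * (n : ℝ) * ((2 : ℝ) ^ Delta j)⁻¹ * (2 : ℝ) ^ k
        = (n : ℝ) * ((2 : ℝ) ^ n * ((2 : ℝ) ^ Delta j)⁻¹ * (2 : ℝ) ^ k) := by ring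
      _ = (n : ℝ) * (2 : ℝ) ^ (D - Delta j) := by rw [haux]
  have hfy : Int.fract ((2 : ℝ) ^ n * n * S) = ((M % N : ℕ) : ℝ) / (N : ℝ) := by
    rw [hy, Int.fract_div_natCast_eq_div_natCast_mod]
  set ε := (2 : ℝ) ^ n * n * (alphaA034797 - S) with hεdef
  have hε0 : 0 ≤ ε := by
    rw [hεdef, hSdef, tail_eq i]
    exact mul_nonneg (by positivity) (tail_nonneg i)
  have hxy : (2 : ℝ) ^ n * n * alphaA034797 = (2 : ℝ) ^ n * n * S + ε := by
    rw [hεdef]; ring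
  by_cases hnD : n = D
  · -- n = D : k = 0, N = 1, y is an integer
    have hk0 : k = 0 := by omega
    have hN1 : N = 1 := by rw [hNdef, hk0]; rfl
    have hyM : (2 : ℝ) ^ n * n * S = (M : ℝ) := by rw [hy, hN1]; simp
    have hfy0 : Int.fract ((2 : ℝ) ^ n * n * S) = 0 := by
      rw [hyM, Int.fract_natCast]
    have hεhalf : ε < 1 / 2 := by
      have : (2 : ℝ) ^ ((n : ℤ) - (D : ℤ) - 1) = 1 / 2 := by
        rw [hnD]; norm_num
      linarith [part1]
    have hfx : Int.fract ((2 : ℝ) ^ n * n * alphaA034797) = ε := by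
      rw [hxy, hyM, Int.fract_natCast_add, Int.fract_eq_self.mpr ⟨hε0, by linarith⟩]
    rw [hfx, hfy0]
    constructor <;> intro <;> linarith
  · -- n < D : k ≥ 1
    have hk1 : 1 ≤ k := by omega
    set r := M % N with hrdef
    have hrN : r < N := Nat.mod_lt _ hNpos
    have hrR : (r : ℝ) ≤ (N : ℝ) - 1 := by
      have h : (r : ℝ) + 1 ≤ (N : ℝ) := by exact_mod_cast Nat.succ_le_of_lt hrN
      linarith
    obtain ⟨c, hcdef⟩ : ∃ c : ℕ, c = 2 ^ (k - 1) := ⟨_, rfl⟩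
    have hNc : N = 2 * c := by
      have hps : 2 ^ ((k - 1) + 1) = 2 * 2 ^ (k - 1) := by rw [pow_succ]; ring
      rw [hcdef, hNdef, ← hps]
      congr 1
      omega
    have hcR : ((c : ℝ)) * 2 = (N : ℝ) := by
      rw [hNc]; push_cast; ring
    have hhalf : ((c : ℝ)) / (N : ℝ) = 1 / 2 := by
      rw [div_eq_div_iff hNR.ne' (two_ne_zero : (2:ℝ) ≠ 0)]
      linarith [hcR]
    have hεb : ε < 1 / (2 * (N : ℝ)) := by
      have h1 : (2 : ℝ) ^ ((n : ℤ) - (D : ℤ) - 1) = ((2 : ℝ) ^ (k + 1 : ℕ))⁻¹ := by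
        rw [← zpow_natCast (2:ℝ) (k+1), ← zpow_neg]
        congr 1
        omega
      have h2 : (2 : ℝ) ^ (k + 1 : ℕ) = 2 * (N : ℝ) := by
        rw [pow_succ, hNdef]; push_cast; ring
      have := part1
      rw [h1, h2] at this
      rw [one_div]
      exact this
    have hfyval : Int.fract ((2 : ℝ) ^ n * n * S) = (r : ℝ) / (N : ℝ) := hfy
    have hsum_lt_one : Int.fract ((2 : ℝ) ^ n * n * S) + ε < 1 := by
      rw [hfyval]
      have h1 : (r : ℝ) / N ≤ 1 - 1 / N := by
        rw [div_le_iff₀ hNR]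
        have : (1 - 1 / (N:ℝ)) * N = N - 1 := by field_simp
        rw [this]; exact hrR
      have h2 : 1 / (2 * (N : ℝ)) = (1 / N) / 2 := by ring
      have h3 : (0 : ℝ) < 1 / N := by positivity
      linarith
    have hfx : Int.fract ((2 : ℝ) ^ n * n * alphaA034797)
        = Int.fract ((2 : ℝ) ^ n * n * S) + ε := by
      set y := (2 : ℝ) ^ n * n * S with hydef
      have h1 : (2 : ℝ) ^ n * n * alphaA034797 = (⌊y⌋ : ℝ) + (Int.fract y + ε) := by
        rw [hxy]
        have := Int.floor_add_fract y
        linarith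
      rw [h1, Int.fract_intCast_add,
        Int.fract_eq_self.mpr ⟨add_nonneg (Int.fract_nonneg y) hε0, hsum_lt_one⟩]
    constructor
    · intro hx
      have := Int.fract_nonneg ((2 : ℝ) ^ n * n * S)
      linarith [hfx, hε0]
    · intro hylt
      rw [hfyval] at hylt
      have hrc : (r : ℝ) ≤ (c : ℝ) - 1 := by
        have h1 : (r : ℝ) < (c : ℝ) := by
          rw [div_lt_iff₀ hNR] at hylt
          nlinarith [hcR]
        have : r < c := by exact_mod_cast h1
        have : r + 1 ≤ c := this
        have : ((r : ℝ) + 1) ≤ c := by exact_mod_cast this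
        linarith
      rw [hfx, hfyval]
      have h2 : 1 / (2 * (N : ℝ)) = (1 / N) / 2 := by ring
      have h3 : (0 : ℝ) < 1 / N := by positivity
      have h4 : (r : ℝ) / N ≤ ((c : ℝ) - 1) / N := by gcongr
      have h5 : ((c : ℝ) - 1) / N = (c : ℝ) / N - 1 / N := by ring
      linarith [hhalf, hεb]
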